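/- For any channel N: CPTP(A→B), Λ²(J_N) ≤ cv(N) ≤ d_B · Λ²(J_N), where Λ²(ω) = max over product unit vectors |α⟩|β⟩ of ⟨α,β|ω|α,β⟩. -/

import Mathlib

open scoped BigOperators Kronecker ComplexOrder
open Matrix

noncomputable section

/-- A density operator: positive semidefinite with unit trace. -/
def IsDensity {ι : Type*} [Fintype ι] (ρ : Matrix ι ι ℂ) : Prop :=
  ρ.PosSemidef ∧ ρ.trace = 1

/-- A separable bipartite positive operator: a nonnegative combination of
tensor products of positive operators. -/
def IsSep {ιA ιB : Type*} [Fintype ιA] [Fintype ιB]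
    (Ω : Matrix (ιA × ιB) (ιA × ιB) ℂ) : Prop :=
  ∃ (n : ℕ) (a : Fin n → Matrix ιA ιA ℂ) (b : Fin n → Matrix ιB ιB ℂ),
    (∀ i, (a i).PosSemidef) ∧ (∀ i, (b i).PosSemidef) ∧
      Ω = ∑ i, a i ⊗ₖ b i

/-- Partial trace over the first (A) system. -/
def ptraceA {ιA ιB : Type*} [Fintype ιA]
    (Ω : Matrix (ιA × ιB) (ιA × ιB) ℂ) : Matrix ιB ιB ℂ :=
  Matrix.of fun k l => ∑ i, Ω (i, k) (i, l)

/-- The Choi matrix of a linear map on matrices. -/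
def choi {ιA ιB : Type*} [Fintype ιA] [DecidableEq ιA]
    (Φ : Matrix ιA ιA ℂ →ₗ[ℂ] Matrix ιB ιB ℂ) :
    Matrix (ιA × ιB) (ιA × ιB) ℂ :=
  Matrix.of fun p q => Φ (Matrix.single p.1 q.1 1) p.2 q.2

/-- A quantum channel: a completely positive (Choi matrix PSD) trace-preserving
linear map. -/
structure Channel (ιA ιB : Type*) [Fintype ιA] [DecidableEq ιA] [Fintype ιB] where
  map : Matrix ιA ιA ℂ →ₗ[ℂ] Matrix ιB ιB ℂ
  cp : (choi map).PosSemidef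
  tp : ∀ X, (map X).trace = X.trace

/-- The communication value, via the conic program over the separable cone:
`cv(N) = max { Tr[Ω J_N] : Ω separable, Tr_A Ω = I }`. -/
def cv {ιA ιB : Type*} [Fintype ιA] [DecidableEq ιA] [Fintype ιB] [DecidableEq ιB]
    (N : Channel ιA ιB) : ℝ :=
  sSup {r | ∃ Ω : Matrix (ιA × ιB) (ιA × ιB) ℂ,
    IsSep Ω ∧ ptraceA Ω = 1 ∧ r = ((Ω * choi N.map).trace).re}

/-- The operational communication value: supremum over finite families of input
states and POVMs of `∑_x Tr[Π_x N(ρ_x)]`. -/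
def cvOp {ιA ιB : Type*} [Fintype ιA] [DecidableEq ιA] [Fintype ιB] [DecidableEq ιB]
    (N : Channel ιA ιB) : ℝ :=
  sSup {r | ∃ (n : ℕ) (ρ : Fin n → Matrix ιA ιA ℂ) (E : Fin n → Matrix ιB ιB ℂ),
    (∀ x, IsDensity (ρ x)) ∧ (∀ x, (E x).PosSemidef) ∧ (∑ x, E x) = 1 ∧
      r = (∑ x, (E x * N.map (ρ x)).trace).re}

/-- Maximal overlap of a bipartite operator with product unit vectors
(`Λ²`, exponential of minus the geometric measure of entanglement). -/
def lam2 {ιA ιB : Type*} [Fintype ιA] [Fintype ιB]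
    (ω : Matrix (ιA × ιB) (ιA × ιB) ℂ) : ℝ :=
  sSup {r | ∃ (a : ιA → ℂ) (b : ιB → ℂ),
    (∑ i, ‖a i‖ ^ 2) = 1 ∧ (∑ k, ‖b k‖ ^ 2) = 1 ∧
      r = (star (fun p : ιA × ιB => a p.1 * b p.2) ⬝ᵥ
        ω *ᵥ fun p : ιA × ιB => a p.1 * b p.2).re}

end

/-! Writing each positive factor of a separable `Ω = ∑ aᵢ ⊗ bᵢ` as a sum of rank-one terms
`|x⟩⟨x|` reduces `Tr[(aᵢ ⊗ bᵢ) J]` to values `⟨x ⊗ y| J |x ⊗ y⟩ ≤ ‖x‖² ‖y‖² Λ²(J)`, so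
`Tr[Ω J] ≤ (∑ Tr aᵢ Tr bᵢ) Λ²(J) = Tr Ω · Λ²(J)`, and `Tr Ω = Tr (Tr_A Ω) = d_B`.
Conversely, for unit vectors `a`, `b` the operator `Ω = |a⟩⟨a| ⊗ I` is separable with
`Tr_A Ω = I`, and `Tr[Ω J]` exceeds `⟨a ⊗ b| J |a ⊗ b⟩` by `Tr[(|a⟩⟨a| ⊗ (I - |b⟩⟨b|)) J] ≥ 0`,
since `I - |b⟩⟨b|` is a projection. -/

section RankOne

variable {ι κ : Type*}

def kronVec (x : ι → ℂ) (y : κ → ℂ) : ι × κ → ℂ := fun p => x p.1 * y p.2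

lemma kronVec_smul (c d : ℂ) (x : ι → ℂ) (y : κ → ℂ) :
    kronVec (c • x) (d • y) = (c * d) • kronVec x y := by
  ext p
  simp only [kronVec, Pi.smul_apply, smul_eq_mul]
  ring

@[simp] lemma zero_kronVec (y : κ → ℂ) : kronVec (0 : ι → ℂ) y = 0 := by
  ext; simp [kronVec]

@[simp] lemma kronVec_zero (x : ι → ℂ) : kronVec x (0 : κ → ℂ) = 0 := by
  ext; simp [kronVec]

lemma vecMulVec_star_kronecker (x : ι → ℂ) (y : κ → ℂ) :
    vecMulVec x (star x) ⊗ₖ vecMulVec y (star y) =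
      vecMulVec (kronVec x y) (star (kronVec x y)) := by
  ext p q
  simp only [kroneckerMap_apply, vecMulVec_apply, kronVec, Pi.star_apply, star_mul']
  ring

lemma sum_kronecker {n : Type*} (s : Finset n) (f : n → Matrix ι ι ℂ) (b : Matrix κ κ ℂ) :
    (∑ j ∈ s, f j) ⊗ₖ b = ∑ j ∈ s, f j ⊗ₖ b := by
  ext p q
  simp [kroneckerMap_apply, Matrix.sum_apply, Finset.sum_mul]

lemma kronecker_sum {n : Type*} (s : Finset n) (a : Matrix ι ι ℂ) (f : n → Matrix κ κ ℂ) :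
    a ⊗ₖ (∑ j ∈ s, f j) = ∑ j ∈ s, a ⊗ₖ f j := by
  ext p q
  simp [kroneckerMap_apply, Matrix.sum_apply, Finset.mul_sum]

variable [Fintype ι]

lemma star_dotProduct_self (x : ι → ℂ) : star x ⬝ᵥ x = ((∑ i, ‖x i‖ ^ 2 : ℝ) : ℂ) := by
  push_cast
  exact Finset.sum_congr rfl fun i _ => Complex.conj_mul' (x i)

lemma star_smul_dotProduct_mulVec_smul (c : ℂ) (w : ι → ℂ) (J : Matrix ι ι ℂ) :
    star (c • w) ⬝ᵥ J *ᵥ (c • w) = star c * c * (star w ⬝ᵥ J *ᵥ w) := by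
  rw [star_smul, mulVec_smul, dotProduct_smul, smul_dotProduct, smul_eq_mul, smul_eq_mul]
  ring

lemma trace_vecMulVec_star (x : ι → ℂ) :
    (vecMulVec x (star x)).trace = ((∑ i, ‖x i‖ ^ 2 : ℝ) : ℂ) := by
  rw [trace_vecMulVec, dotProduct_comm, star_dotProduct_self]

lemma trace_vecMulVec_star_mul (x : ι → ℂ) (J : Matrix ι ι ℂ) :
    (vecMulVec x (star x) * J).trace = star x ⬝ᵥ J *ᵥ x := by
  rw [vecMulVec_mul, trace_vecMulVec, dotProduct_comm, dotProduct_mulVec]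

lemma Matrix.PosSemidef.trace_mul_nonneg {A J : Matrix ι ι ℂ} (hA : A.PosSemidef)
    (hJ : J.PosSemidef) : 0 ≤ (A * J).trace := by
  obtain ⟨m, v, rfl⟩ := posSemidef_iff_eq_sum_vecMulVec.mp hA
  rw [Finset.sum_mul, trace_sum]
  exact Finset.sum_nonneg fun i _ => by
    rw [trace_vecMulVec_star_mul]
    exact hJ.dotProduct_mulVec_nonneg _

lemma posSemidef_one_sub_vecMulVec_star [DecidableEq ι] {b : ι → ℂ}
    (hb : ∑ i, ‖b i‖ ^ 2 = 1) : (1 - vecMulVec b (star b)).PosSemidef := by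
  set P := vecMulVec b (star b)
  have hP : P * P = P := by
    rw [vecMulVec_mul_vecMulVec, star_dotProduct_self, hb, Complex.ofReal_one, one_smul]
  have hPh : Pᴴ = P := by rw [conjTranspose_vecMulVec, star_star]
  have hQ : (1 - P)ᴴ * (1 - P) = 1 - P := by
    rw [conjTranspose_sub, conjTranspose_one, hPh, sub_mul, mul_sub, mul_sub, hP]
    simp
  exact hQ ▸ posSemidef_conjTranspose_mul_self _

end RankOne

section Lam2

variable {ι κ : Type*} [Fintype ι] [Fintype κ]

lemma norm_le_one_of_sum_norm_sq_eq_one {x : ι → ℂ} (hx : ∑ i, ‖x i‖ ^ 2 = 1) (i : ι) :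
    ‖x i‖ ≤ 1 := by
  have : ‖x i‖ ^ 2 ≤ 1 :=
    hx ▸ Finset.single_le_sum (fun j _ => sq_nonneg ‖x j‖) (Finset.mem_univ i)
  exact (sq_le_one_iff₀ (norm_nonneg _)).mp this

lemma re_star_dotProduct_mulVec_le {w : ι → ℂ} (hw : ∀ i, ‖w i‖ ≤ 1) (ω : Matrix ι ι ℂ) :
    (star w ⬝ᵥ ω *ᵥ w).re ≤ ∑ i, ∑ j, ‖ω i j‖ := by
  calc (star w ⬝ᵥ ω *ᵥ w).re ≤ ‖star w ⬝ᵥ ω *ᵥ w‖ := Complex.re_le_norm _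
    _ = ‖∑ i, ∑ j, star (w i) * ω i j * w j‖ := by
        simp only [dotProduct, mulVec, Finset.mul_sum, Pi.star_apply, mul_assoc]
    _ ≤ ∑ i, ∑ j, ‖star (w i) * ω i j * w j‖ :=
        (norm_sum_le _ _).trans (Finset.sum_le_sum fun i _ => norm_sum_le _ _)
    _ = ∑ i, ∑ j, ‖w i‖ * ‖ω i j‖ * ‖w j‖ := by simp only [norm_mul, norm_star]
    _ ≤ ∑ i, ∑ j, 1 * ‖ω i j‖ * 1 := by gcongr with i _ j _ <;> exact hw _
    _ = ∑ i, ∑ j, ‖ω i j‖ := by simp only [one_mul, mul_one]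

lemma re_kronVec_le_lam2 (ω : Matrix (ι × κ) (ι × κ) ℂ) {a : ι → ℂ} {b : κ → ℂ}
    (ha : ∑ i, ‖a i‖ ^ 2 = 1) (hb : ∑ k, ‖b k‖ ^ 2 = 1) :
    (star (kronVec a b) ⬝ᵥ ω *ᵥ kronVec a b).re ≤ lam2 ω := by
  refine le_csSup ⟨∑ p, ∑ q, ‖ω p q‖, ?_⟩ ⟨a, b, ha, hb, rfl⟩
  rintro _ ⟨a, b, ha, hb, rfl⟩
  refine re_star_dotProduct_mulVec_le (fun p => ?_) ω
  rw [norm_mul]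
  exact mul_le_one₀ (norm_le_one_of_sum_norm_sq_eq_one ha _) (norm_nonneg _)
    (norm_le_one_of_sum_norm_sq_eq_one hb _)

lemma sum_norm_sq_pos {x : ι → ℂ} (hx : x ≠ 0) : 0 < ∑ i, ‖x i‖ ^ 2 := by
  obtain ⟨i, hi⟩ := Function.ne_iff.mp hx
  exact Finset.sum_pos' (fun j _ => sq_nonneg _)
    ⟨i, Finset.mem_univ i, pow_pos (norm_pos_iff.mpr hi) 2⟩

lemma sum_norm_sq_inv_sqrt_smul {x : ι → ℂ} (hx : x ≠ 0) :
    ∑ i, ‖((((√(∑ j, ‖x j‖ ^ 2))⁻¹ : ℝ) : ℂ) • x) i‖ ^ 2 = 1 := by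
  simp only [Pi.smul_apply, norm_smul, Complex.norm_real, mul_pow, ← Finset.mul_sum]
  rw [Real.norm_eq_abs, sq_abs, inv_pow, Real.sq_sqrt (sum_norm_sq_pos hx).le,
    inv_mul_cancel₀ (sum_norm_sq_pos hx).ne']

lemma re_kronVec_le_mul_lam2 (ω : Matrix (ι × κ) (ι × κ) ℂ) (x : ι → ℂ) (y : κ → ℂ) :
    (star (kronVec x y) ⬝ᵥ ω *ᵥ kronVec x y).re ≤
      (∑ i, ‖x i‖ ^ 2) * (∑ k, ‖y k‖ ^ 2) * lam2 ω := by
  rcases eq_or_ne x 0 with rfl | hx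
  · simp
  rcases eq_or_ne y 0 with rfl | hy
  · simp
  have hle :=
    re_kronVec_le_lam2 ω (sum_norm_sq_inv_sqrt_smul hx) (sum_norm_sq_inv_sqrt_smul hy)
  rw [kronVec_smul, star_smul_dotProduct_mulVec_smul, ← Complex.ofReal_mul, Complex.star_def,
    Complex.conj_ofReal, ← Complex.ofReal_mul, Complex.re_ofReal_mul] at hle
  set s := √(∑ i, ‖x i‖ ^ 2)
  set t := √(∑ k, ‖y k‖ ^ 2)
  have hs : 0 < s := Real.sqrt_pos.mpr (sum_norm_sq_pos hx)
  have ht : 0 < t := Real.sqrt_pos.mpr (sum_norm_sq_pos hy)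
  set q := (star (kronVec x y) ⬝ᵥ ω *ᵥ kronVec x y).re
  calc q = (s * t) ^ 2 * (s⁻¹ * t⁻¹ * (s⁻¹ * t⁻¹) * q) := by field_simp
    _ ≤ (s * t) ^ 2 * lam2 ω := by gcongr
    _ = (∑ i, ‖x i‖ ^ 2) * (∑ k, ‖y k‖ ^ 2) * lam2 ω := by
        rw [mul_pow, Real.sq_sqrt (sum_norm_sq_pos hx).le, Real.sq_sqrt (sum_norm_sq_pos hy).le]

lemma lam2_nonneg {ω : Matrix (ι × κ) (ι × κ) ℂ} (hω : ω.PosSemidef) : 0 ≤ lam2 ω :=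
  Real.sSup_nonneg fun _ ⟨_, _, _, _, hr⟩ =>
    hr ▸ (Complex.nonneg_iff.mp (hω.dotProduct_mulVec_nonneg _)).1

end Lam2

section Separable

variable {ι κ : Type*} [Fintype ι]

lemma ptraceA_kronecker (a : Matrix ι ι ℂ) (b : Matrix κ κ ℂ) :
    ptraceA (a ⊗ₖ b) = a.trace • b := by
  ext k l
  simp [ptraceA, kroneckerMap_apply, trace, Finset.sum_mul]

variable [Fintype κ]

lemma re_trace_kronecker_mul_le {a : Matrix ι ι ℂ} {b : Matrix κ κ ℂ} (ha : a.PosSemidef)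
    (hb : b.PosSemidef) (ω : Matrix (ι × κ) (ι × κ) ℂ) :
    ((a ⊗ₖ b) * ω).trace.re ≤ a.trace.re * b.trace.re * lam2 ω := by
  obtain ⟨m, u, rfl⟩ := posSemidef_iff_eq_sum_vecMulVec.mp ha
  obtain ⟨n, v, rfl⟩ := posSemidef_iff_eq_sum_vecMulVec.mp hb
  calc _ = ∑ i, ∑ j, (star (kronVec (u i) (v j)) ⬝ᵥ ω *ᵥ kronVec (u i) (v j)).re := by
        rw [sum_kronecker]
        simp only [kronecker_sum, vecMulVec_star_kronecker, Finset.sum_mul, trace_sum,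
          trace_vecMulVec_star_mul, Complex.re_sum]
    _ ≤ ∑ i, ∑ j, (∑ p, ‖u i p‖ ^ 2) * (∑ q, ‖v j q‖ ^ 2) * lam2 ω := by
        gcongr with i _ j _
        exact re_kronVec_le_mul_lam2 ω (u i) (v j)
    _ = _ := by
        simp only [trace_sum, trace_vecMulVec_star, Complex.re_sum, Complex.ofReal_re]
        rw [Finset.sum_mul_sum, Finset.sum_mul]
        exact Finset.sum_congr rfl fun i _ => (Finset.sum_mul ..).symm

lemma IsSep.re_trace_mul_le {Ω : Matrix (ι × κ) (ι × κ) ℂ} (hΩ : IsSep Ω)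
    (ω : Matrix (ι × κ) (ι × κ) ℂ) : (Ω * ω).trace.re ≤ Ω.trace.re * lam2 ω := by
  obtain ⟨n, a, b, ha, hb, rfl⟩ := hΩ
  simp only [Finset.sum_mul, trace_sum, Complex.re_sum, trace_kronecker]
  refine Finset.sum_le_sum fun i _ => (re_trace_kronecker_mul_le (ha i) (hb i) ω).trans_eq ?_
  rw [Complex.mul_re, ← (Complex.nonneg_iff.mp (ha i).trace_nonneg).2, zero_mul, sub_zero]

lemma IsSep.posSemidef {Ω : Matrix (ι × κ) (ι × κ) ℂ} (hΩ : IsSep Ω) : Ω.PosSemidef := by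
  obtain ⟨n, a, b, ha, hb, rfl⟩ := hΩ
  exact posSemidef_sum _ fun i _ => (ha i).kronecker (hb i)

lemma trace_ptraceA (Ω : Matrix (ι × κ) (ι × κ) ℂ) : (ptraceA Ω).trace = Ω.trace := by
  simp only [trace, diag, ptraceA, of_apply, Fintype.sum_prod_type]
  exact Finset.sum_comm

lemma IsSep.re_trace_mul_le_card_mul_lam2 [DecidableEq κ] {Ω : Matrix (ι × κ) (ι × κ) ℂ}
    (hΩ : IsSep Ω) (hpt : ptraceA Ω = 1) (ω : Matrix (ι × κ) (ι × κ) ℂ) :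
    (Ω * ω).trace.re ≤ Fintype.card κ * lam2 ω := by
  simpa [← trace_ptraceA Ω, hpt] using hΩ.re_trace_mul_le ω

end Separable

section CommunicationValue

variable {ιA ιB : Type*} [Fintype ιA] [DecidableEq ιA] [Fintype ιB] [DecidableEq ιB]

lemma le_cv (N : Channel ιA ιB) {Ω : Matrix (ιA × ιB) (ιA × ιB) ℂ} (hΩ : IsSep Ω)
    (hpt : ptraceA Ω = 1) : (Ω * choi N.map).trace.re ≤ cv N :=
  le_csSup ⟨_, fun _ ⟨_, hΩ', hpt', hr⟩ => hr ▸ hΩ'.re_trace_mul_le_card_mul_lam2 hpt' _⟩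
    ⟨Ω, hΩ, hpt, rfl⟩

lemma cv_nonneg (N : Channel ιA ιB) : 0 ≤ cv N :=
  Real.sSup_nonneg fun _ ⟨_, hΩ, _, hr⟩ =>
    hr ▸ (Complex.nonneg_iff.mp (hΩ.posSemidef.trace_mul_nonneg N.cp)).1

lemma cv_le_card_mul_lam2 (N : Channel ιA ιB) :
    cv N ≤ Fintype.card ιB * lam2 (choi N.map) :=
  Real.sSup_le (fun _ ⟨_, hΩ, hpt, hr⟩ => hr ▸ hΩ.re_trace_mul_le_card_mul_lam2 hpt _)
    (mul_nonneg (Nat.cast_nonneg _) (lam2_nonneg N.cp))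

lemma lam2_le_cv (N : Channel ιA ιB) : lam2 (choi N.map) ≤ cv N := by
  refine Real.sSup_le ?_ (cv_nonneg N)
  rintro _ ⟨a, b, ha, hb, rfl⟩
  change (star (kronVec a b) ⬝ᵥ choi N.map *ᵥ kronVec a b).re ≤ cv N
  set Pa := vecMulVec a (star a)
  set Pb := vecMulVec b (star b)
  have hsep : IsSep (Pa ⊗ₖ (1 : Matrix ιB ιB ℂ)) :=
    ⟨1, ![Pa], ![1], by simp [Pa, posSemidef_vecMulVec_self_star], by simp [PosSemidef.one],
      by simp⟩
  have hpt : ptraceA (Pa ⊗ₖ (1 : Matrix ιB ιB ℂ)) = 1 := by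
    rw [ptraceA_kronecker, trace_vecMulVec_star, ha, Complex.ofReal_one, one_smul]
  have hsplit : (Pa ⊗ₖ 1 * choi N.map).trace = star (kronVec a b) ⬝ᵥ choi N.map *ᵥ kronVec a b
      + (Pa ⊗ₖ (1 - Pb) * choi N.map).trace := by
    rw [← trace_vecMulVec_star_mul, ← vecMulVec_star_kronecker, ← trace_add, ← add_mul,
      ← kronecker_add, add_sub_cancel]
  have hrest : 0 ≤ (Pa ⊗ₖ (1 - Pb) * choi N.map).trace.re :=
    (Complex.nonneg_iff.mp (((posSemidef_vecMulVec_self_star a).kronecker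
      (posSemidef_one_sub_vecMulVec_star hb)).trace_mul_nonneg N.cp)).1
  calc _ ≤ (Pa ⊗ₖ 1 * choi N.map).trace.re := by
        rw [hsplit, Complex.add_re]
        linarith
    _ ≤ cv N := le_cv N hsep hpt

end CommunicationValue

theorem lam2_le_cv_le_general {ιA ιB : Type*} [Fintype ιA] [DecidableEq ιA]
    [Fintype ιB] [DecidableEq ιB]
    (N : Channel ιA ιB) :
    lam2 (choi N.map) ≤ cv N ∧ cv N ≤ (Fintype.card ιB : ℝ) * lam2 (choi N.map) :=
  ⟨lam2_le_cv N, cv_le_card_mul_lam2 N⟩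

/-- `Λ²(J_N) ≤ cv(N) ≤ d_B · Λ²(J_N)`. -/
theorem lam2_le_cv_le {ιA ιB : Type*} [Fintype ιA] [DecidableEq ιA]
    [Fintype ιB] [DecidableEq ιB] [Nonempty ιA] [Nonempty ιB]
    (N : Channel ιA ιB) :
    lam2 (choi N.map) ≤ cv N ∧ cv N ≤ (Fintype.card ιB : ℝ) * lam2 (choi N.map) :=
  lam2_le_cv_le_general N
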